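/- arXiv:1809.01509 — 5 statements merged into one kernel-verified Lean document; each statement's English description precedes it below -/
import Mathlib

section
/- Let (Y, 𝒜, μ) and (Z, ℬ, ν) be σ-finite measure spaces, let (v_j)_{j∈J} be a Hilbert basis (complete orthonormal family) of L²(Y, μ; ℂ) and (w_m)_{m∈M} a Hilbert basis of L²(Z, ν; ℂ). Then the family of functions ((y,z) ↦ v_j(y)·w_m(z)) indexed by (j,m) ∈ J × M is a Hilbert basis of L²(Y × Z, μ ⊗ ν; ℂ). -/
/-!
Only completeness needs an argument. Let `f ∈ L²(μ ⊗ ν)` be orthogonal to every `v j ⊗ w m`.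
For fixed `j`, the partial inner product `z ↦ ∫ conj (v j y) * f (y, z) dμ` lies in `L²(ν)` by
Cauchy–Schwarz and Fubini, and by Fubini it is orthogonal to every `w m`, so it vanishes; hence
`f ⊥ v j ⊗ ψ` for every `ψ ∈ L²(ν)`. The same argument in the first variable gives `f ⊥ φ ⊗ ψ`
for all `φ ∈ L²(μ)`, `ψ ∈ L²(ν)`. Taking indicators, `f` integrates to zero over every rectangle
of finite measure; a π-λ argument on each rectangle of a σ-finite exhaustion then gives `f = 0`
almost everywhere.
-/

open MeasureTheory ComplexConjugate Classical

namespace MeasureTheory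

variable {α β 𝕜 : Type*} [MeasurableSpace α] [MeasurableSpace β] [RCLike 𝕜]
  {μ : Measure α} {ν : Measure β}

theorem MemLp.mul_prod {f : α → 𝕜} {g : β → 𝕜} (hf : MemLp f 2 μ) (hg : MemLp g 2 ν) :
    MemLp (fun x : α × β => f x.1 * g x.2) 2 (μ.prod ν) := by
  have hfg : AEStronglyMeasurable (fun x : α × β => f x.1 * g x.2) (μ.prod ν) :=
    hf.1.comp_fst.mul hg.1.comp_snd
  rw [memLp_two_iff_integrable_sq_norm hf.1] at hf
  rw [memLp_two_iff_integrable_sq_norm hg.1] at hg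
  rw [memLp_two_iff_integrable_sq_norm hfg]
  simpa only [norm_mul, mul_pow] using hf.mul_prod hg

theorem norm_integral_conj_mul_le {f g : α → 𝕜} (hf : MemLp f 2 μ) (hg : MemLp g 2 μ) :
    ‖∫ x, conj (f x) * g x ∂μ‖ ≤ √(∫ x, ‖f x‖ ^ 2 ∂μ) * √(∫ x, ‖g x‖ ^ 2 ∂μ) := by
  have holder := integral_mul_norm_le_Lp_mul_Lq Real.HolderConjugate.two_two
    (by simpa using hf) (by simpa using hg)
  simp only [Real.rpow_two, ← Real.sqrt_eq_rpow] at holder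
  calc ‖∫ x, conj (f x) * g x ∂μ‖ ≤ ∫ x, ‖conj (f x) * g x‖ ∂μ := norm_integral_le_integral_norm _
    _ = ∫ x, ‖f x‖ * ‖g x‖ ∂μ := by simp only [norm_mul, RCLike.norm_conj]
    _ ≤ _ := holder

theorem MemLp.integral_conj_mul_right [SFinite μ] [SFinite ν] {f : α × β → 𝕜}
    (hf : MemLp f 2 (μ.prod ν)) {ψ : β → 𝕜} (hψ : MemLp ψ 2 ν) :
    MemLp (fun x => ∫ y, conj (ψ y) * f (x, y) ∂ν) 2 μ := by
  have hf2 := (memLp_two_iff_integrable_sq_norm hf.1).1 hf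
  have hG : MemLp (fun x => √(∫ y, ‖f (x, y)‖ ^ 2 ∂ν)) 2 μ := by
    refine (memLp_two_iff_integrable_sq_norm
      (Real.continuous_sqrt.comp_aestronglyMeasurable hf2.integral_prod_left.1)).2 ?_
    refine hf2.integral_prod_left.congr (ae_of_all _ fun x => ?_)
    simp only [Real.norm_of_nonneg (Real.sqrt_nonneg _)]
    exact (Real.sq_sqrt (integral_nonneg fun _ => by positivity)).symm
  have hmeas : AEStronglyMeasurable (fun x => ∫ y, conj (ψ y) * f (x, y) ∂ν) μ :=
    (hψ.1.star.comp_snd.mul hf.1).integral_prod_right'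
  refine (hG.const_mul √(∫ y, ‖ψ y‖ ^ 2 ∂ν)).of_le hmeas ?_
  filter_upwards [hf.1.prodMk_left, hf2.prod_right_ae] with x hx hx2
  refine (norm_integral_conj_mul_le hψ ((memLp_two_iff_integrable_sq_norm hx).2 hx2)).trans ?_
  exact le_of_eq (Real.norm_of_nonneg (by positivity)).symm

theorem integral_conj_mul_prod_mul [SFinite μ] [SFinite ν] (f g : α → 𝕜) (f' g' : β → 𝕜) :
    ∫ x, conj (f x.1 * f' x.2) * (g x.1 * g' x.2) ∂(μ.prod ν)
      = (∫ x, conj (f x) * g x ∂μ) * ∫ y, conj (f' y) * g' y ∂ν := by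
  rw [← integral_prod_mul]
  congr 1 with x
  simp only [map_mul]
  ring

theorem integral_conj_mul_prod_eq_integral_integral [SFinite μ] [SFinite ν]
    {φ : α → 𝕜} {ψ : β → 𝕜} {f : α × β → 𝕜}
    (hφ : MemLp φ 2 μ) (hψ : MemLp ψ 2 ν) (hf : MemLp f 2 (μ.prod ν)) :
    ∫ x, conj (φ x.1 * ψ x.2) * f x ∂(μ.prod ν)
      = ∫ x, conj (φ x) * ∫ y, conj (ψ y) * f (x, y) ∂ν ∂μ := by
  have hint : Integrable (fun x : α × β => conj (φ x.1 * ψ x.2) * f x) (μ.prod ν) :=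
    (hφ.mul_prod hψ).star.integrable_mul hf
  rw [integral_prod _ hint]
  simp_rw [map_mul, mul_assoc, integral_const_mul]

theorem integral_conj_mul_prod_swap [SFinite μ] [SFinite ν] (φ : α → 𝕜) (ψ : β → 𝕜)
    (f : α × β → 𝕜) :
    ∫ x, conj (φ x.1 * ψ x.2) * f x ∂(μ.prod ν)
      = ∫ x, conj (ψ x.1 * φ x.2) * f x.swap ∂(ν.prod μ) := by
  rw [← integral_prod_swap]
  simp only [Prod.fst_swap, Prod.snd_swap, mul_comm (ψ _)]

def IsCompleteInL2 {ι : Type*} (μ : Measure α) (v : ι → α → 𝕜) : Prop :=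
  ∀ f : α → 𝕜, MemLp f 2 μ → (∀ i, ∫ x, conj (v i x) * f x ∂μ = 0) → f =ᵐ[μ] 0

theorem integral_conj_mul_prod_eq_zero_of_complete_left [SFinite μ] [SFinite ν] {ι : Type*}
    {v : ι → α → 𝕜} (hv : ∀ i, MemLp (v i) 2 μ) (hcomplete : IsCompleteInL2 μ v)
    {f : α × β → 𝕜} (hf : MemLp f 2 (μ.prod ν)) {ψ : β → 𝕜} (hψ : MemLp ψ 2 ν)
    (horth : ∀ i, ∫ x, conj (v i x.1 * ψ x.2) * f x ∂(μ.prod ν) = 0)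
    {φ : α → 𝕜} (hφ : MemLp φ 2 μ) :
    ∫ x, conj (φ x.1 * ψ x.2) * f x ∂(μ.prod ν) = 0 := by
  have hzero : (fun x => ∫ y, conj (ψ y) * f (x, y) ∂ν) =ᵐ[μ] 0 :=
    hcomplete _ (hf.integral_conj_mul_right hψ) fun i => by
      rw [← integral_conj_mul_prod_eq_integral_integral (hv i) hψ hf]
      exact horth i
  rw [integral_conj_mul_prod_eq_integral_integral hφ hψ hf, integral_eq_zero_of_ae]
  filter_upwards [hzero] with x hx
  simp [hx]

theorem integral_conj_mul_prod_eq_zero_of_complete_right [SFinite μ] [SFinite ν] {ι : Type*}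
    {w : ι → β → 𝕜} (hw : ∀ i, MemLp (w i) 2 ν) (hcomplete : IsCompleteInL2 ν w)
    {f : α × β → 𝕜} (hf : MemLp f 2 (μ.prod ν)) {φ : α → 𝕜} (hφ : MemLp φ 2 μ)
    (horth : ∀ i, ∫ x, conj (φ x.1 * w i x.2) * f x ∂(μ.prod ν) = 0)
    {ψ : β → 𝕜} (hψ : MemLp ψ 2 ν) :
    ∫ x, conj (φ x.1 * ψ x.2) * f x ∂(μ.prod ν) = 0 := by
  have hf_swap : MemLp (fun x => f x.swap) 2 (ν.prod μ) :=
    hf.comp_measurePreserving Measure.measurePreserving_swap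
  rw [integral_conj_mul_prod_swap]
  refine integral_conj_mul_prod_eq_zero_of_complete_left hw hcomplete hf_swap hφ (fun i => ?_) hψ
  rw [← integral_conj_mul_prod_swap]
  exact horth i

section PiSystem

variable {γ E : Type*} [NormedAddCommGroup E] [NormedSpace ℝ E]

theorem setIntegral_eq_zero_of_isPiSystem {m : MeasurableSpace γ} {ρ : Measure γ}
    {s : Set (Set γ)} (h_eq : m = MeasurableSpace.generateFrom s) (h_inter : IsPiSystem s)
    {f : γ → E} (hf : Integrable f ρ) (h_univ : ∫ x, f x ∂ρ = 0)
    (basic : ∀ t ∈ s, ∫ x in t, f x ∂ρ = 0) {t : Set γ} (ht : MeasurableSet t) :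
    ∫ x in t, f x ∂ρ = 0 := by
  induction t, ht using MeasurableSpace.induction_on_inter h_eq h_inter with
  | empty => simp
  | basic t ht => exact basic t ht
  | compl t ht iht => rw [setIntegral_compl ht hf, h_univ, iht, sub_zero]
  | iUnion g hdisj hg ih => simp [integral_iUnion hg hdisj hf.integrableOn, ih]

theorem Integrable.ae_eq_zero_of_forall_setIntegral_prod_eq_zero [CompleteSpace E]
    {ρ : Measure (α × β)} {f : α × β → E} (hf : Integrable f ρ)
    (h : ∀ s t, MeasurableSet s → MeasurableSet t → ∫ x in s ×ˢ t, f x ∂ρ = 0) :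
    f =ᵐ[ρ] 0 := by
  refine hf.ae_eq_zero_of_forall_setIntegral_eq_zero fun u hu _ => ?_
  refine setIntegral_eq_zero_of_isPiSystem generateFrom_prod.symm isPiSystem_prod hf ?_ ?_ hu
  · rw [← setIntegral_univ, ← Set.univ_prod_univ]
    exact h _ _ .univ .univ
  · rintro _ ⟨s, hs, t, ht, rfl⟩
    exact h s t hs ht

theorem ae_eq_zero_of_forall_setIntegral_prod_eq_zero [CompleteSpace E] [SigmaFinite μ]
    [SigmaFinite ν] {f : α × β → E}
    (hf : ∀ s t, MeasurableSet s → MeasurableSet t → μ s < ⊤ → ν t < ⊤ →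
      IntegrableOn f (s ×ˢ t) (μ.prod ν))
    (h : ∀ s t, MeasurableSet s → MeasurableSet t → μ s < ⊤ → ν t < ⊤ →
      ∫ x in s ×ˢ t, f x ∂(μ.prod ν) = 0) :
    f =ᵐ[μ.prod ν] 0 := by
  have hcover : ⋃ n, spanningSets μ n ×ˢ spanningSets ν n = Set.univ := by
    rw [Set.iUnion_prod_of_monotone (monotone_spanningSets μ) (monotone_spanningSets ν),
      iUnion_spanningSets, iUnion_spanningSets, Set.univ_prod_univ]
  rw [Filter.EventuallyEq, ← Measure.restrict_univ (μ := μ.prod ν), ← hcover,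
    ae_restrict_iUnion_iff]
  intro n
  refine Integrable.ae_eq_zero_of_forall_setIntegral_prod_eq_zero
    (hf _ _ (measurableSet_spanningSets μ n) (measurableSet_spanningSets ν n)
      (measure_spanningSets_lt_top μ n) (measure_spanningSets_lt_top ν n)) fun s t hs ht => ?_
  rw [Measure.restrict_restrict (hs.prod ht), Set.prod_inter_prod]
  exact h _ _ (hs.inter (measurableSet_spanningSets μ n))
    (ht.inter (measurableSet_spanningSets ν n))
    ((measure_mono Set.inter_subset_right).trans_lt (measure_spanningSets_lt_top μ n))
    ((measure_mono Set.inter_subset_right).trans_lt (measure_spanningSets_lt_top ν n))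

end PiSystem

theorem ae_eq_zero_of_forall_integral_conj_mul_prod_eq_zero [SigmaFinite μ] [SigmaFinite ν]
    {f : α × β → 𝕜} (hf : MemLp f 2 (μ.prod ν))
    (h : ∀ φ ψ, MemLp φ 2 μ → MemLp ψ 2 ν → ∫ x, conj (φ x.1 * ψ x.2) * f x ∂(μ.prod ν) = 0) :
    f =ᵐ[μ.prod ν] 0 := by
  refine ae_eq_zero_of_forall_setIntegral_prod_eq_zero (fun s t hs ht hμs hνt => ?_)
    fun s t hs ht hμs hνt => ?_
  · have : IsFiniteMeasure ((μ.prod ν).restrict (s ×ˢ t)) := isFiniteMeasure_restrict.2 (by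
      rw [Measure.prod_prod]; exact ENNReal.mul_ne_top hμs.ne hνt.ne)
    exact (hf.restrict _).integrable one_le_two
  · rw [← integral_indicator (hs.prod ht), ← h _ _ (memLp_indicator_const 2 hs 1 (.inr hμs.ne))
      (memLp_indicator_const 2 ht 1 (.inr hνt.ne))]
    congr 1 with x
    by_cases hx : x.1 ∈ s <;> by_cases hy : x.2 ∈ t <;> simp [Set.indicator, hx, hy]

end MeasureTheory

/-- if `(v j)_{j ∈ J}` is a Hilbert basis of `L²(Y, μ; ℂ)` and `(w m)_{m ∈ M}`
is a Hilbert basis of `L²(Z, ν; ℂ)` (orthonormal families that are complete, in the sense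
that any `L²` function orthogonal to all members vanishes a.e.), then the tensor-product
family `((y,z) ↦ v j y · w m z)_{(j,m) ∈ J × M}` is a Hilbert basis of
`L²(Y × Z, μ ⊗ ν; ℂ)`. -/
theorem tensor_product_hilbert_basis
    {Y Z : Type*} [MeasurableSpace Y] [MeasurableSpace Z]
    (μ : Measure Y) (ν : Measure Z) [SigmaFinite μ] [SigmaFinite ν]
    {J M : Type*} (v : J → Y → ℂ) (w : M → Z → ℂ)
    (hvmem : ∀ j, MemLp (v j) 2 μ) (hwmem : ∀ m, MemLp (w m) 2 ν)
    (hvorth : ∀ j j', ∫ y, conj (v j y) * v j' y ∂μ = if j = j' then 1 else 0)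
    (hworth : ∀ m m', ∫ z, conj (w m z) * w m' z ∂ν = if m = m' then 1 else 0)
    (hvcomplete : ∀ f : Y → ℂ, MemLp f 2 μ →
      (∀ j, ∫ y, conj (v j y) * f y ∂μ = 0) → f =ᵐ[μ] 0)
    (hwcomplete : ∀ g : Z → ℂ, MemLp g 2 ν →
      (∀ m, ∫ z, conj (w m z) * g z ∂ν = 0) → g =ᵐ[ν] 0) :
    (∀ jm : J × M,
        MemLp (fun x : Y × Z => v jm.1 x.1 * w jm.2 x.2) 2 (μ.prod ν)) ∧
    (∀ jm jm' : J × M,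
        ∫ x : Y × Z, conj (v jm.1 x.1 * w jm.2 x.2) * (v jm'.1 x.1 * w jm'.2 x.2)
          ∂(μ.prod ν) = if jm = jm' then 1 else 0) ∧
    (∀ f : Y × Z → ℂ, MemLp f 2 (μ.prod ν) →
      (∀ jm : J × M, ∫ x : Y × Z, conj (v jm.1 x.1 * w jm.2 x.2) * f x ∂(μ.prod ν) = 0) →
      f =ᵐ[μ.prod ν] 0) := by
  refine ⟨fun jm => (hvmem jm.1).mul_prod (hwmem jm.2), fun jm jm' => ?_, fun f hf horth => ?_⟩
  · rw [integral_conj_mul_prod_mul, hvorth, hworth]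
    simp only [ite_zero_mul_ite_zero, one_mul, Prod.ext_iff]
  · have horth_left : ∀ j ψ, MemLp ψ 2 ν →
        ∫ x : Y × Z, conj (v j x.1 * ψ x.2) * f x ∂(μ.prod ν) = 0 := fun j ψ hψ =>
      integral_conj_mul_prod_eq_zero_of_complete_right hwmem hwcomplete hf (hvmem j)
        (fun m => horth (j, m)) hψ
    exact ae_eq_zero_of_forall_integral_conj_mul_prod_eq_zero hf fun φ ψ hφ hψ =>
      integral_conj_mul_prod_eq_zero_of_complete_left hvmem hvcomplete hf hψ
        (fun j => horth_left j ψ hψ) hφ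
end

section
/- Let Q = (0,π)³ and let u : [0,π]³ → ℝ³ be continuous on the closed cube and C¹ on Q with div u = 0 on Q, satisfying the perfectly conducting boundary conditions (for each face {x_i ∈ {0,π}} the two components u_j with j ≠ i vanish on that face). Suppose u is L²-orthogonal on Q to every TE field E^{TE}_{k₁k₂k₃}(x) = (−k₂ cos(k₁x₁) sin(k₂x₂) sin(k₃x₃), k₁ sin(k₁x₁) cos(k₂x₂) sin(k₃x₃), 0) with k₁,k₂ ∈ ℕ not both zero and k₃ ≥ 1, and to every TM field E^{TM}_{k₁k₂k₃}(x) = (−k₁k₃ cos(k₁x₁) sin(k₂x₂) sin(k₃x₃), −k₂k₃ sin(k₁x₁) cos(k₂x₂) sin(k₃x₃), (k₁²+k₂²) sin(k₁x₁) sin(k₂x₂) cos(k₃x₃)) with k₁,k₂ ≥ 1 and k₃ ∈ ℕ. Then u = 0 on Q. -/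
noncomputable section

open Real Set

/-- Three-dimensional Euclidean space. -/
abbrev V3 : Type := EuclideanSpace ℝ (Fin 3)
/-- Two-dimensional Euclidean space. -/
abbrev V2 : Type := EuclideanSpace ℝ (Fin 2)

/-- Partial derivative `∂ᵢf` of a scalar function on `ℝ³` (indices `0,1,2` correspond to
`∂₁,∂₂,∂₃`). -/
def pd3 (i : Fin 3) (f : V3 → ℝ) (x : V3) : ℝ := fderiv ℝ f x (EuclideanSpace.single i 1)

/-- Partial derivative `∂ᵢf` of a scalar function on `ℝ²`. -/
def pd2 (i : Fin 2) (f : V2 → ℝ) (x : V2) : ℝ := fderiv ℝ f x (EuclideanSpace.single i 1)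

/-- The curl of a vector field `u = (u₁,u₂,u₃)` on `ℝ³`:
`curl u = (∂₂u₃ − ∂₃u₂, ∂₃u₁ − ∂₁u₃, ∂₁u₂ − ∂₂u₁)`. -/
def curl3 (u : V3 → Fin 3 → ℝ) (x : V3) : Fin 3 → ℝ :=
  ![pd3 1 (fun y => u y 2) x - pd3 2 (fun y => u y 1) x,
    pd3 2 (fun y => u y 0) x - pd3 0 (fun y => u y 2) x,
    pd3 0 (fun y => u y 1) x - pd3 1 (fun y => u y 0) x]

/-- The divergence `div u = ∂₁u₁ + ∂₂u₂ + ∂₃u₃` of a vector field on `ℝ³`. -/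
def div3 (u : V3 → Fin 3 → ℝ) (x : V3) : ℝ :=
  pd3 0 (fun y => u y 0) x + pd3 1 (fun y => u y 1) x + pd3 2 (fun y => u y 2) x

/-- The Laplacian `Δf = ∂₁²f + ∂₂²f + ∂₃²f` of a scalar function on `ℝ³`. -/
def lap3 (f : V3 → ℝ) (x : V3) : ℝ :=
  pd3 0 (pd3 0 f) x + pd3 1 (pd3 1 f) x + pd3 2 (pd3 2 f) x

/-- The gradient of a scalar function on `ℝ³`. -/
def grad3 (f : V3 → ℝ) (x : V3) : Fin 3 → ℝ := ![pd3 0 f x, pd3 1 f x, pd3 2 f x]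

/-- The cross product of two vectors of `ℝ³` (as triples of reals). -/
def cross3 (a b : Fin 3 → ℝ) : Fin 3 → ℝ :=
  ![a 1 * b 2 - a 2 * b 1, a 2 * b 0 - a 0 * b 2, a 0 * b 1 - a 1 * b 0]

/-- The transverse Laplacian `Δ⊥f = ∂₁²f + ∂₂²f` of a scalar function on `ℝ²`. -/
def lapPerp (f : V2 → ℝ) (x : V2) : ℝ := pd2 0 (pd2 0 f) x + pd2 1 (pd2 1 f) x

/-- The transverse part `x⊥ = (x₁,x₂)` of a point `x = (x₁,x₂,x₃) ∈ ℝ³`. -/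
def perp (x : V3) : V2 := WithLp.toLp 2 ![x 0, x 1]

/-- The TE eigenfield of the cube `(0,π)³` with integer frequencies `(k₁,k₂,k₃)`:
`E(x) = (−k₂ cos(k₁x₁) sin(k₂x₂) sin(k₃x₃), k₁ sin(k₁x₁) cos(k₂x₂) sin(k₃x₃), 0)`. -/
def ETEcube (k₁ k₂ k₃ : ℕ) (x : V3) : Fin 3 → ℝ :=
  ![-(k₂ : ℝ) * Real.cos (k₁ * x 0) * Real.sin (k₂ * x 1) * Real.sin (k₃ * x 2),
    (k₁ : ℝ) * Real.sin (k₁ * x 0) * Real.cos (k₂ * x 1) * Real.sin (k₃ * x 2), 0]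

/-- The TM eigenfield of the cube `(0,π)³` with integer frequencies `(k₁,k₂,k₃)`:
`E(x) = (−k₁k₃ cos sin sin, −k₂k₃ sin cos sin, (k₁²+k₂²) sin sin cos)`. -/
def ETMcube (k₁ k₂ k₃ : ℕ) (x : V3) : Fin 3 → ℝ :=
  ![-((k₁ : ℝ) * k₃) * Real.cos (k₁ * x 0) * Real.sin (k₂ * x 1) * Real.sin (k₃ * x 2),
    -((k₂ : ℝ) * k₃) * Real.sin (k₁ * x 0) * Real.cos (k₂ * x 1) * Real.sin (k₃ * x 2),
    ((k₁ : ℝ) ^ 2 + (k₂ : ℝ) ^ 2) * Real.sin (k₁ * x 0) * Real.sin (k₂ * x 1) *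
      Real.cos (k₃ * x 2)]

/-!
Expand each component `uᵢ` in the modes `cos (kᵢ xᵢ) ∏_{j ≠ i} sin (kⱼ xⱼ)`, with coefficients
`cᵢ(k)`. Orthogonality to the TE and TM fields, and `div u = 0` tested against
`φ = ∏ⱼ sin (kⱼ xⱼ)` through the divergence theorem for `φ u`, say that `c(k)` is orthogonal to
the pairwise orthogonal vectors `(-k₂, k₁, 0)`, `(-k₁k₃, -k₂k₃, k₁² + k₂²)` and `k`; where one of
them degenerates, the corresponding mode vanishes identically. Hence `c(k) = 0` for all `k`.
The modes are complete: multiplying a mode by `cos xⱼ` gives a combination of modes, so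
`uᵢ ∏_{j ≠ i} sin xⱼ` is orthogonal to the algebra generated by the `cos xⱼ`, which is dense in
`C([0, π]³)` by Stone–Weierstrass.
-/

open MeasureTheory

section Orthogonality

variable {X : Type*} [TopologicalSpace X]

theorem ContinuousMap.exists_mem_subalgebra_near_continuousOn_of_isCompact
    {A : Subalgebra ℝ C(X, ℝ)} {K : Set X} (hK : IsCompact K)
    (hA : ∀ x ∈ K, ∀ y ∈ K, x ≠ y → ∃ a ∈ A, a x ≠ a y) {f : X → ℝ} (hf : ContinuousOn f K)
    {ε : ℝ} (hε : 0 < ε) : ∃ a ∈ A, ∀ x ∈ K, |a x - f x| < ε := by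
  have : CompactSpace K := isCompact_iff_compactSpace.mp hK
  let AK : Subalgebra ℝ C(K, ℝ) :=
    A.map (ContinuousMap.compRightAlgHom ℝ ℝ ⟨Subtype.val, continuous_subtype_val⟩)
  have hAK : AK.SeparatesPoints := by
    intro x y hxy
    obtain ⟨a, ha, hne⟩ := hA x x.2 y y.2 (Subtype.coe_ne_coe.mpr hxy)
    exact ⟨_, ⟨_, Subalgebra.mem_map.2 ⟨a, ha, rfl⟩, rfl⟩, hne⟩
  obtain ⟨⟨g, hg⟩, hgf⟩ := ContinuousMap.exists_mem_subalgebra_near_continuous_of_separatesPoints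
    AK hAK (K.domRestrict f) hf.domRestrict ε hε
  obtain ⟨a, ha, rfl⟩ := Subalgebra.mem_map.1 hg
  exact ⟨a, ha, fun x hx => hgf ⟨x, hx⟩⟩

variable [MeasurableSpace X] {μ : Measure X} {U : Set X} {v : X → ℝ}

theorem setIntegral_mul_eq_zero_of_mem_span {S : Set C(X, ℝ)}
    (hint : ∀ f : C(X, ℝ), IntegrableOn (fun x => v x * f x) U μ)
    (h : ∀ f ∈ S, ∫ x in U, v x * f x ∂μ = 0) {f : C(X, ℝ)} (hf : f ∈ Submodule.span ℝ S) :
    ∫ x in U, v x * f x ∂μ = 0 := by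
  induction hf using Submodule.span_induction with
  | mem f hf => exact h f hf
  | zero => simp
  | add f g _ _ hf hg =>
    simp only [ContinuousMap.add_apply, mul_add, integral_add (hint f) (hint g), hf, hg, add_zero]
  | smul c f _ hf =>
    simp only [ContinuousMap.smul_apply, smul_eq_mul, mul_left_comm (v _), integral_const_mul, hf,
      mul_zero]

variable [T2Space X] [OpensMeasurableSpace X] [IsFiniteMeasureOnCompacts μ] [μ.IsOpenPosMeasure]
  {K : Set X}

/-- By Stone–Weierstrass `v` is a uniform limit on `K` of elements of `A`, so it is orthogonal
to itself on `U`. -/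
theorem eqOn_zero_of_forall_mem_subalgebra_setIntegral_mul_eq_zero {A : Subalgebra ℝ C(X, ℝ)}
    (hK : IsCompact K) (hU : IsOpen U) (hUK : U ⊆ K)
    (hA : ∀ x ∈ K, ∀ y ∈ K, x ≠ y → ∃ a ∈ A, a x ≠ a y) (hv : ContinuousOn v K)
    (h : ∀ a ∈ A, ∫ x in U, v x * a x ∂μ = 0) : EqOn v 0 U := by
  have hint : ∀ {w : X → ℝ}, ContinuousOn w K → IntegrableOn (fun x => v x * w x) U μ :=
    fun hw => ((hv.mul hw).integrableOn_compact hK).mono_set hUK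
  set M := ∫ x in U, |v x| ∂μ
  have hM : 0 ≤ M := setIntegral_nonneg hU.measurableSet fun x _ => abs_nonneg _
  have hsq : ∫ x in U, v x * v x ∂μ = 0 := by
    refine le_antisymm (le_of_forall_pos_le_add fun ε hε => ?_)
      (setIntegral_nonneg hU.measurableSet fun x _ => mul_self_nonneg _)
    obtain ⟨a, ha, hav⟩ := ContinuousMap.exists_mem_subalgebra_near_continuousOn_of_isCompact hK
      hA hv (ε := ε / (M + 1)) (by positivity)
    have hvM : IntegrableOn (fun x => |v x|) U μ := (hv.abs.integrableOn_compact hK).mono_set hUK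
    calc ∫ x in U, v x * v x ∂μ = ∫ x in U, v x * (v x - a x) ∂μ := by
          simp only [mul_sub]
          rw [integral_sub (hint hv) (hint a.continuous.continuousOn), h a ha, sub_zero]
      _ ≤ ∫ x in U, |v x| * (ε / (M + 1)) ∂μ := by
          refine setIntegral_mono_on (hint (hv.sub a.continuous.continuousOn))
            (hvM.mul_const _) hU.measurableSet fun x hx => ?_
          calc v x * (v x - a x) ≤ |v x| * |v x - a x| := by
                rw [← abs_mul]; exact le_abs_self _
            _ ≤ |v x| * (ε / (M + 1)) :=
                mul_le_mul_of_nonneg_left (abs_sub_comm (a x) _ ▸ hav x (hUK hx)).le (abs_nonneg _)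
      _ = M * (ε / (M + 1)) := integral_mul_const _ _
      _ ≤ 0 + ε := by
          rw [zero_add, mul_div_assoc', div_le_iff₀ (by positivity)]
          nlinarith
  have hae : (fun x => v x * v x) =ᵐ[μ.restrict U] 0 :=
    (integral_eq_zero_iff_of_nonneg (fun x => mul_self_nonneg _) (hint hv)).1 hsq
  intro x hx
  exact mul_self_eq_zero.1 <| Measure.eqOn_open_of_ae_eq hae hU
    ((hv.mono hUK).mul (hv.mono hUK)) continuousOn_const hx

end Orthogonality

section CubeModes

variable {ι : Type*}

def openCube (ι : Type*) : Set (EuclideanSpace ℝ ι) := {x | ∀ i, x i ∈ Ioo 0 π}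

def closedCube (ι : Type*) : Set (EuclideanSpace ℝ ι) := {x | ∀ i, x i ∈ Icc 0 π}

theorem isOpen_openCube [Finite ι] : IsOpen (openCube ι) := by
  have h : openCube ι = WithLp.ofLp ⁻¹' univ.pi fun _ => Ioo 0 π := by ext; simp [openCube]
  rw [h]
  exact (isOpen_set_pi finite_univ fun _ _ => isOpen_Ioo).preimage (PiLp.continuous_ofLp 2 _)

theorem isCompact_closedCube : IsCompact (closedCube ι) := by
  have h := (isCompact_univ_pi fun _ : ι => isCompact_Icc (a := 0) (b := π)).image
    (PiLp.continuous_toLp 2 fun _ : ι => ℝ)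
  convert h using 1
  ext x
  exact ⟨fun hx => ⟨WithLp.ofLp x, fun i _ => hx i, rfl⟩,
    by rintro ⟨y, hy, rfl⟩ i; exact hy i trivial⟩

theorem openCube_subset_closedCube : openCube ι ⊆ closedCube ι :=
  fun _ hx i => Ioo_subset_Icc_self (hx i)

def cosCoord (j : ι) : C(EuclideanSpace ℝ ι, ℝ) := ⟨fun x => cos (x j), by fun_prop⟩

theorem exists_cosCoord_ne_of_mem_closedCube {x y : EuclideanSpace ℝ ι} (hx : x ∈ closedCube ι)
    (hy : y ∈ closedCube ι) (hxy : x ≠ y) : ∃ j, cosCoord j x ≠ cosCoord j y := by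
  obtain ⟨j, hj⟩ : ∃ j, x j ≠ y j := by
    by_contra! h
    exact hxy (PiLp.ext h)
  exact ⟨j, fun h => hj (injOn_cos (hx j) (hy j) h)⟩

variable [Fintype ι] [DecidableEq ι]

/-- The `i`-th component of a TE or TM field of frequency `k` is a multiple of `cubeMode i k`. -/
def cubeMode (i : ι) (k : ι → ℕ) : C(EuclideanSpace ℝ ι, ℝ) where
  toFun x := ∏ j, (if j = i then cos else sin) (k j * x j)
  continuous_toFun := continuous_finsetProd _ fun j _ => by split_ifs <;> fun_prop

theorem exists_cos_mul_eq_add {f : ℝ → ℝ} (hf : f = cos ∨ f = sin) (n : ℕ) :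
    ∃ (a b : ℝ) (m₁ m₂ : ℕ), ∀ t, cos t * f (n * t) = a * f (m₁ * t) + b * f (m₂ * t) := by
  rcases n with _ | n
  · rcases hf with rfl | rfl
    · exact ⟨1, 0, 1, 0, by simp⟩
    · exact ⟨0, 0, 0, 0, by simp⟩
  refine ⟨1 / 2, 1 / 2, n + 2, n, fun t => ?_⟩
  have h₁ : ((n + 2 : ℕ) : ℝ) * t = (n + 1 : ℕ) * t + t := by push_cast; ring
  have h₂ : (n : ℝ) * t = (n + 1 : ℕ) * t - t := by push_cast; ring
  rw [h₁, h₂]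
  rcases hf with rfl | rfl
  · rw [cos_add, cos_sub]; ring
  · rw [sin_add, sin_sub]; ring

theorem cubeMode_update_apply (i j : ι) (k : ι → ℕ) (m : ℕ) (x : EuclideanSpace ℝ ι) :
    cubeMode i (Function.update k j m) x =
      (if j = i then cos else sin) (m * x j) *
        ∏ l ∈ Finset.univ.erase j, (if l = i then cos else sin) (k l * x l) := by
  rw [cubeMode, ContinuousMap.coe_mk, ← Finset.mul_prod_erase Finset.univ _ (Finset.mem_univ j),
    Function.update_self]
  congr 1
  refine Finset.prod_congr rfl fun l hl => ?_
  rw [Function.update_of_ne (Finset.ne_of_mem_erase hl)]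

theorem cosCoord_mul_cubeMode_mem_span (i j : ι) (k : ι → ℕ) :
    cosCoord j * cubeMode i k ∈ Submodule.span ℝ (range (cubeMode i)) := by
  obtain ⟨a, b, m₁, m₂, h⟩ :=
    exists_cos_mul_eq_add (f := if j = i then cos else sin) (by split_ifs <;> simp) (k j)
  have : cosCoord j * cubeMode i k =
      a • cubeMode i (Function.update k j m₁) + b • cubeMode i (Function.update k j m₂) := by
    ext x
    conv_lhs => rw [ContinuousMap.mul_apply, ← Function.update_eq_self j k, cubeMode_update_apply,
      ← mul_assoc]
    simp only [cosCoord, ContinuousMap.coe_mk, h, ContinuousMap.add_apply,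
      ContinuousMap.smul_apply, cubeMode_update_apply, smul_eq_mul]
    ring
  rw [this]
  exact add_mem (Submodule.smul_mem _ _ (Submodule.subset_span ⟨_, rfl⟩))
    (Submodule.smul_mem _ _ (Submodule.subset_span ⟨_, rfl⟩))

theorem mul_mem_span_cubeMode_of_mem_adjoin {i : ι} {a w : C(EuclideanSpace ℝ ι, ℝ)}
    (ha : a ∈ Algebra.adjoin ℝ (range cosCoord))
    (hw : w ∈ Submodule.span ℝ (range (cubeMode i))) :
    a * w ∈ Submodule.span ℝ (range (cubeMode i)) := by
  induction ha using Algebra.adjoin_induction generalizing w with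
  | mem a ha =>
    obtain ⟨j, rfl⟩ := ha
    induction hw using Submodule.span_induction with
    | mem w hw => obtain ⟨k, rfl⟩ := hw; exact cosCoord_mul_cubeMode_mem_span i j k
    | zero => simp
    | add w w' _ _ hw hw' => rw [mul_add]; exact add_mem hw hw'
    | smul c w _ hw => rw [mul_smul_comm]; exact Submodule.smul_mem _ _ hw
  | algebraMap r =>
    rw [Algebra.algebraMap_eq_smul_one, smul_one_mul]; exact Submodule.smul_mem _ _ hw
  | add a b _ _ ha hb => rw [add_mul]; exact add_mem (ha hw) (hb hw)
  | mul a b _ _ ha hb => rw [mul_assoc]; exact ha (hb hw)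

theorem eqOn_zero_of_forall_setIntegral_mul_cubeMode_eq_zero {v : EuclideanSpace ℝ ι → ℝ}
    (hv : ContinuousOn v (closedCube ι)) (i : ι)
    (h : ∀ k, ∫ x in openCube ι, v x * cubeMode i k x = 0) : EqOn v 0 (openCube ι) := by
  -- `s = ∏_{j ≠ i} sin x_j` is itself a mode, and is positive on the open cube.
  set s := cubeMode i fun j => if j = i then 0 else 1
  have hs : ∀ x ∈ openCube ι, 0 < s x := fun x hx =>
    Finset.prod_pos fun j _ => by
      by_cases hj : j = i
      · simp [hj]
      · simpa [hj] using sin_pos_of_pos_of_lt_pi (hx j).1 (hx j).2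
  have hint : ∀ f : C(EuclideanSpace ℝ ι, ℝ), IntegrableOn (fun x => v x * f x) (openCube ι) :=
    fun f => ((hv.mul f.continuous.continuousOn).integrableOn_compact isCompact_closedCube).mono_set
      openCube_subset_closedCube
  have hvs : EqOn (fun x => v x * s x) 0 (openCube ι) := by
    refine eqOn_zero_of_forall_mem_subalgebra_setIntegral_mul_eq_zero isCompact_closedCube
      isOpen_openCube openCube_subset_closedCube (μ := volume)
      (A := Algebra.adjoin ℝ (range cosCoord))
      (fun x hx y hy hxy => ?_) (hv.mul s.continuous.continuousOn) fun a ha => ?_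
    · obtain ⟨j, hj⟩ := exists_cosCoord_ne_of_mem_closedCube hx hy hxy
      exact ⟨_, Algebra.subset_adjoin ⟨j, rfl⟩, hj⟩
    · simpa only [ContinuousMap.mul_apply, mul_assoc, mul_comm (a _)] using
        setIntegral_mul_eq_zero_of_mem_span hint (by rintro _ ⟨k, rfl⟩; exact h k)
          (mul_mem_span_cubeMode_of_mem_adjoin ha (Submodule.subset_span ⟨_, rfl⟩))
  intro x hx
  exact (mul_eq_zero.1 (hvs hx)).resolve_right (hs x hx).ne'

end CubeModes

section Divergence

variable {n : ℕ}

theorem setIntegral_pi_Ioo_sum_mul_fderiv_eq_zero {a b : Fin (n + 1) → ℝ} (hle : a ≤ b)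
    {u : Fin (n + 1) → (Fin (n + 1) → ℝ) → ℝ} {φ : (Fin (n + 1) → ℝ) → ℝ}
    (hu : ∀ i, ContinuousOn (u i) (Icc a b))
    (hud : ∀ x ∈ univ.pi fun i => Ioo (a i) (b i), ∀ i, DifferentiableAt ℝ (u i) x)
    (hdiv : ∀ x ∈ univ.pi fun i => Ioo (a i) (b i), ∑ i, fderiv ℝ (u i) x (Pi.single i 1) = 0)
    (hφ : Differentiable ℝ φ) (hφ0 : ∀ i x, x i = a i ∨ x i = b i → φ x = 0)
    (hint : IntegrableOn (fun x => ∑ i, u i x * fderiv ℝ φ x (Pi.single i 1))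
      (univ.pi fun i => Ioo (a i) (b i))) :
    ∫ x in univ.pi fun i => Ioo (a i) (b i), ∑ i, u i x * fderiv ℝ φ x (Pi.single i 1) = 0 := by
  set box := univ.pi fun i => Ioo (a i) (b i)
  have hbox : box =ᵐ[volume] Icc a b := Measure.univ_pi_Ioo_ae_eq_Icc
  set F' := fun i x => φ x • fderiv ℝ (u i) x + u i x • fderiv ℝ φ x
  -- `div (φ u) = φ div u + ∇φ · u`
  have hF' : EqOn (fun x => ∑ i, F' i x (Pi.single i 1))
      (fun x => ∑ i, u i x * fderiv ℝ φ x (Pi.single i 1)) box := by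
    intro x hx
    simp only [F', add_apply, smul_apply, smul_eq_mul,
      Finset.sum_add_distrib, ← Finset.mul_sum, hdiv x hx, mul_zero, zero_add]
  have hdivthm := integral_divergence_of_hasFDerivAt_off_countable' a b hle
    (fun i x => φ x * u i x) F' ∅ countable_empty
    (fun i => hφ.continuous.continuousOn.mul (hu i))
    (fun x hx i => (hφ x).hasFDerivAt.mul (hud x hx.1 i).hasFDerivAt)
    ((hint.congr_fun hF'.symm (MeasurableSet.univ_pi fun _ => measurableSet_Ioo)).congr_set_ae
      hbox.symm)
  calc ∫ x in box, ∑ i, u i x * fderiv ℝ φ x (Pi.single i 1)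
      = ∫ x in box, ∑ i, F' i x (Pi.single i 1) :=
        setIntegral_congr_fun (MeasurableSet.univ_pi fun _ => measurableSet_Ioo) hF'.symm
    _ = ∫ x in Icc a b, ∑ i, F' i x (Pi.single i 1) := setIntegral_congr_set hbox
    _ = 0 := by
        rw [hdivthm]
        refine Finset.sum_eq_zero fun i _ => ?_
        simp [hφ0 i]

theorem setIntegral_openCube_sum_mul_fderiv_eq_zero
    {u : Fin (n + 1) → EuclideanSpace ℝ (Fin (n + 1)) → ℝ} {φ : EuclideanSpace ℝ (Fin (n + 1)) → ℝ}
    (hu : ∀ i, ContinuousOn (u i) (closedCube _))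
    (hud : ∀ x ∈ openCube _, ∀ i, DifferentiableAt ℝ (u i) x)
    (hdiv : ∀ x ∈ openCube _, ∑ i, fderiv ℝ (u i) x (EuclideanSpace.single i 1) = 0)
    (hφ : Differentiable ℝ φ) (hφ0 : ∀ i x, x i = 0 ∨ x i = π → φ x = 0)
    (hint : IntegrableOn (fun x => ∑ i, u i x * fderiv ℝ φ x (EuclideanSpace.single i 1))
      (openCube _)) :
    ∫ x in openCube _, ∑ i, u i x * fderiv ℝ φ x (EuclideanSpace.single i 1) = 0 := by
  set e := EuclideanSpace.equiv (Fin (n + 1)) ℝ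
  set T := MeasurableEquiv.toLp 2 (Fin (n + 1) → ℝ)
  have hT : MeasurePreserving T :=
    (EuclideanSpace.volume_preserving_symm_measurableEquiv_toLp _).symm
  have hbox : T ⁻¹' openCube _ = univ.pi fun _ => Ioo 0 π := by ext; simp [openCube, T]
  have hfderiv : ∀ (f : EuclideanSpace ℝ (Fin (n + 1)) → ℝ) y i,
      fderiv ℝ (f ∘ e.symm) y (Pi.single i 1) = fderiv ℝ f (T y) (EuclideanSpace.single i 1) := by
    intro f y i
    rw [e.symm.comp_right_fderiv]
    rfl
  have hG : ∀ y, ∑ i, (u i ∘ e.symm) y * fderiv ℝ (φ ∘ e.symm) y (Pi.single i 1) =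
      ∑ i, u i (T y) * fderiv ℝ φ (T y) (EuclideanSpace.single i 1) := fun y => by
    simp only [hfderiv]; rfl
  rw [← hT.setIntegral_preimage_emb T.measurableEmbedding, hbox, ← funext hG]
  rw [← hT.integrableOn_comp_preimage T.measurableEmbedding, hbox] at hint
  refine setIntegral_pi_Ioo_sum_mul_fderiv_eq_zero (a := 0) (b := fun _ => π)
    (fun _ => pi_pos.le) (fun i => (hu i).comp e.symm.continuous.continuousOn
      fun y hy i => ⟨hy.1 i, hy.2 i⟩) (fun y hy i => ?_) (fun y hy => ?_)
    (hφ.comp e.symm.differentiable) (fun i y hy => hφ0 i (T y) hy) (by simp only [hG]; exact hint)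
  · exact (hud (T y) (fun i => hy i trivial) i).comp y e.symm.differentiableAt
  · simpa only [hfderiv] using hdiv (T y) fun i => hy i trivial

end Divergence

section SinMode

variable {ι : Type*} [Fintype ι]

def sinMode (k : ι → ℕ) (x : EuclideanSpace ℝ ι) : ℝ := ∏ j, sin (k j * x j)

theorem sinMode_eq_zero (k : ι → ℕ) {x : EuclideanSpace ℝ ι} {i : ι} (hx : x i = 0 ∨ x i = π) :
    sinMode k x = 0 :=
  Finset.prod_eq_zero (Finset.mem_univ i) <| by rcases hx with hx | hx <;> simp [hx, sin_nat_mul_pi]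

variable [DecidableEq ι]

theorem hasFDerivAt_sinMode (k : ι → ℕ) (x : EuclideanSpace ℝ ι) :
    HasFDerivAt (sinMode k) (∑ j, (∏ l ∈ Finset.univ.erase j, sin (k l * x l)) •
      cos (k j * x j) • (k j : ℝ) • EuclideanSpace.proj (𝕜 := ℝ) j) x :=
  HasFDerivAt.finsetProd fun j _ => (hasDerivAt_sin _).comp_hasFDerivAt x
    ((EuclideanSpace.proj (𝕜 := ℝ) j).hasFDerivAt.const_mul _)

theorem cubeMode_apply_eq_cos_mul_prod_erase (i : ι) (k : ι → ℕ) (x : EuclideanSpace ℝ ι) :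
    cubeMode i k x = cos (k i * x i) * ∏ l ∈ Finset.univ.erase i, sin (k l * x l) := by
  have h := cubeMode_update_apply i i k (k i) x
  rw [Function.update_eq_self, if_pos rfl] at h
  rw [h]
  congr 1
  exact Finset.prod_congr rfl fun l hl => by rw [if_neg (Finset.ne_of_mem_erase hl)]

theorem fderiv_sinMode_single (k : ι → ℕ) (x : EuclideanSpace ℝ ι) (i : ι) :
    fderiv ℝ (sinMode k) x (EuclideanSpace.single i 1) = k i * cubeMode i k x := by
  rw [(hasFDerivAt_sinMode k x).fderiv, cubeMode_apply_eq_cos_mul_prod_erase]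
  simp
  ring

end SinMode

section Coefficients

variable {ι : Type*} [Fintype ι] [DecidableEq ι]

def cubeCoeff (u : EuclideanSpace ℝ ι → ι → ℝ) (i : ι) (k : ι → ℕ) : ℝ :=
  ∫ x in openCube ι, u x i * cubeMode i k x

variable {u : EuclideanSpace ℝ ι → ι → ℝ}

theorem setIntegral_sum_mul_smul_cubeMode (hu : ContinuousOn u (closedCube ι)) (a : ι → ℝ)
    (k : ι → ℕ) :
    ∫ x in openCube ι, ∑ i, u x i * (a i * cubeMode i k x) = ∑ i, a i * cubeCoeff u i k := by
  have hint : ∀ i, IntegrableOn (fun x => u x i * cubeMode i k x) (openCube ι) := fun i =>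
    ((((continuous_apply i).comp_continuousOn hu).mul (cubeMode i k).continuous.continuousOn
      ).integrableOn_compact isCompact_closedCube).mono_set openCube_subset_closedCube
  simp only [mul_left_comm (u _ _)]
  rw [integral_finsetSum _ fun i _ => (hint i).const_mul (a i)]
  simp only [integral_const_mul, cubeCoeff]

theorem cubeCoeff_eq_zero_of_eq_zero {i j : ι} (hji : j ≠ i) {k : ι → ℕ} (hk : k j = 0) :
    cubeCoeff u i k = 0 := by
  have : ∀ x, cubeMode i k x = 0 := fun x =>
    Finset.prod_eq_zero (Finset.mem_univ j) (by simp [hji, hk])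
  simp [cubeCoeff, this]

end Coefficients

theorem sum_mul_cubeCoeff_eq_zero_of_div3_eq_zero {u : V3 → Fin 3 → ℝ}
    (hucont : ContinuousOn u (closedCube (Fin 3))) (huC1 : ContDiffOn ℝ 1 u (openCube (Fin 3)))
    (hudiv : ∀ x ∈ openCube (Fin 3), div3 u x = 0) (k : Fin 3 → ℕ) :
    ∑ i, (k i : ℝ) * cubeCoeff u i k = 0 := by
  have hu : ∀ i, ContinuousOn (fun x => u x i) (closedCube (Fin 3)) := fun i =>
    (continuous_apply i).comp_continuousOn hucont
  rw [← setIntegral_sum_mul_smul_cubeMode hucont]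
  simp only [← fderiv_sinMode_single]
  refine setIntegral_openCube_sum_mul_fderiv_eq_zero hu (fun x hx i => ?_) (fun x hx => ?_)
    (fun x => (hasFDerivAt_sinMode k x).differentiableAt) (fun i x => sinMode_eq_zero k) ?_
  · exact differentiableAt_pi.1
      ((huC1.differentiableOn one_ne_zero).differentiableAt (isOpen_openCube.mem_nhds hx)) i
  · simpa [div3, pd3, Fin.sum_univ_three] using hudiv x hx
  · simp only [fderiv_sinMode_single]
    exact (continuousOn_finsetSum _ fun i _ => (hu i).mul (continuousOn_const.mul
      (cubeMode i k).continuous.continuousOn)).integrableOn_compact isCompact_closedCube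
      |>.mono_set openCube_subset_closedCube

theorem ETEcube_apply (k : Fin 3 → ℕ) (x : V3) (i : Fin 3) :
    ETEcube (k 0) (k 1) (k 2) x i = ![-(k 1 : ℝ), k 0, 0] i * cubeMode i k x := by
  fin_cases i <;> simp [ETEcube, cubeMode, Fin.prod_univ_three] <;> ring

theorem ETMcube_apply (k : Fin 3 → ℕ) (x : V3) (i : Fin 3) :
    ETMcube (k 0) (k 1) (k 2) x i =
      ![-((k 0 : ℝ) * k 2), -((k 1 : ℝ) * k 2), (k 0 : ℝ) ^ 2 + (k 1 : ℝ) ^ 2] i *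
        cubeMode i k x := by
  fin_cases i <;> simp [ETMcube, cubeMode, Fin.prod_univ_three] <;> ring

theorem setIntegral_sum_mul_ETEcube {u : V3 → Fin 3 → ℝ}
    (hu : ContinuousOn u (closedCube (Fin 3))) (k : Fin 3 → ℕ) :
    ∫ x in openCube (Fin 3), ∑ i, u x i * ETEcube (k 0) (k 1) (k 2) x i =
      -(k 1 : ℝ) * cubeCoeff u 0 k + k 0 * cubeCoeff u 1 k := by
  simp only [ETEcube_apply]
  rw [setIntegral_sum_mul_smul_cubeMode hu]
  simp [Fin.sum_univ_three]

theorem setIntegral_sum_mul_ETMcube {u : V3 → Fin 3 → ℝ}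
    (hu : ContinuousOn u (closedCube (Fin 3))) (k : Fin 3 → ℕ) :
    ∫ x in openCube (Fin 3), ∑ i, u x i * ETMcube (k 0) (k 1) (k 2) x i =
      -((k 0 : ℝ) * k 2) * cubeCoeff u 0 k + -((k 1 : ℝ) * k 2) * cubeCoeff u 1 k +
        ((k 0 : ℝ) ^ 2 + (k 1 : ℝ) ^ 2) * cubeCoeff u 2 k := by
  simp only [ETMcube_apply]
  rw [setIntegral_sum_mul_smul_cubeMode hu]
  simp [Fin.sum_univ_three]

/-- The vectors `(-k₁, k₀, 0)`, `(-k₀k₂, -k₁k₂, k₀² + k₁²)` and `(k₀, k₁, k₂)` are pairwise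
orthogonal. -/
theorem eq_zero_of_orthogonal_te_tm_wavevector {k₀ k₁ k₂ : ℕ} {c₀ c₁ c₂ : ℝ}
    (hTE : ¬(k₀ = 0 ∧ k₁ = 0) → 1 ≤ k₂ → -(k₁ : ℝ) * c₀ + k₀ * c₁ = 0)
    (hTM : 1 ≤ k₀ → 1 ≤ k₁ →
      -((k₀ : ℝ) * k₂) * c₀ + -((k₁ : ℝ) * k₂) * c₁ + ((k₀ : ℝ) ^ 2 + (k₁ : ℝ) ^ 2) * c₂ = 0)
    (hdiv : (k₀ : ℝ) * c₀ + k₁ * c₁ + k₂ * c₂ = 0) (h₀ : k₁ = 0 ∨ k₂ = 0 → c₀ = 0)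
    (h₁ : k₀ = 0 ∨ k₂ = 0 → c₁ = 0) (h₂ : k₀ = 0 ∨ k₁ = 0 → c₂ = 0) :
    c₀ = 0 ∧ c₁ = 0 ∧ c₂ = 0 := by
  have hc₂ : c₂ = 0 := by
    by_cases h : k₀ = 0 ∨ k₁ = 0
    · exact h₂ h
    obtain ⟨h, h'⟩ := not_or.1 h
    have hk₀ : (0 : ℝ) < k₀ := by exact_mod_cast Nat.pos_of_ne_zero h
    have : ((k₀ : ℝ) ^ 2 + k₁ ^ 2 + k₂ ^ 2) * c₂ = 0 := by
      linear_combination hTM (Nat.one_le_iff_ne_zero.2 h) (Nat.one_le_iff_ne_zero.2 h') +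
        (k₂ : ℝ) * hdiv
    exact (mul_eq_zero.1 this).resolve_left (by positivity)
  refine ⟨?_, ?_, hc₂⟩
  · by_cases h : k₁ = 0 ∨ k₂ = 0
    · exact h₀ h
    obtain ⟨h, h'⟩ := not_or.1 h
    have hk₁ : (0 : ℝ) < k₁ := by exact_mod_cast Nat.pos_of_ne_zero h
    have : ((k₀ : ℝ) ^ 2 + k₁ ^ 2) * c₀ = 0 := by
      linear_combination (k₀ : ℝ) * hdiv - (k₁ : ℝ) * hTE (fun hk => h hk.2)
        (Nat.one_le_iff_ne_zero.2 h') - (k₀ * k₂ : ℝ) * hc₂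
    exact (mul_eq_zero.1 this).resolve_left (by positivity)
  · by_cases h : k₀ = 0 ∨ k₂ = 0
    · exact h₁ h
    obtain ⟨h, h'⟩ := not_or.1 h
    have hk₀ : (0 : ℝ) < k₀ := by exact_mod_cast Nat.pos_of_ne_zero h
    have : ((k₀ : ℝ) ^ 2 + k₁ ^ 2) * c₁ = 0 := by
      linear_combination (k₁ : ℝ) * hdiv + (k₀ : ℝ) * hTE (fun hk => h hk.1)
        (Nat.one_le_iff_ne_zero.2 h') - (k₁ * k₂ : ℝ) * hc₂
    exact (mul_eq_zero.1 this).resolve_left (by positivity)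

theorem cube_completeness_general (u : V3 → Fin 3 → ℝ)
    (hucont : ContinuousOn u {x : V3 | ∀ i, x i ∈ Set.Icc 0 π})
    (huC1 : ContDiffOn ℝ 1 u {x : V3 | ∀ i, x i ∈ Set.Ioo 0 π})
    (hudiv : ∀ x : V3, (∀ i, x i ∈ Set.Ioo 0 π) → div3 u x = 0)
    (hTE : ∀ k₁ k₂ k₃ : ℕ, ¬(k₁ = 0 ∧ k₂ = 0) → 1 ≤ k₃ →
      ∫ x in {x : V3 | ∀ i, x i ∈ Set.Ioo 0 π},
        (∑ i, u x i * ETEcube k₁ k₂ k₃ x i) = 0)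
    (hTM : ∀ k₁ k₂ k₃ : ℕ, 1 ≤ k₁ → 1 ≤ k₂ →
      ∫ x in {x : V3 | ∀ i, x i ∈ Set.Ioo 0 π},
        (∑ i, u x i * ETMcube k₁ k₂ k₃ x i) = 0) :
    ∀ x : V3, (∀ i, x i ∈ Set.Ioo 0 π) → u x = 0 := by
  have hcoeff : ∀ i k, cubeCoeff u i k = 0 := by
    intro i k
    have hdiv := sum_mul_cubeCoeff_eq_zero_of_div3_eq_zero hucont huC1 hudiv k
    rw [Fin.sum_univ_three] at hdiv
    have hzero : ∀ {i j}, j ≠ i → k j = 0 → cubeCoeff u i k = 0 :=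
      fun hji hk => cubeCoeff_eq_zero_of_eq_zero hji hk
    obtain ⟨h₀, h₁, h₂⟩ := eq_zero_of_orthogonal_te_tm_wavevector
      (fun h h' => (setIntegral_sum_mul_ETEcube hucont k).symm.trans (hTE _ _ _ h h'))
      (fun h h' => (setIntegral_sum_mul_ETMcube hucont k).symm.trans (hTM _ _ (k 2) h h')) hdiv
      (fun h => h.elim (hzero (by decide)) (hzero (by decide)))
      (fun h => h.elim (hzero (by decide)) (hzero (by decide)))
      (fun h => h.elim (hzero (by decide)) (hzero (by decide)))
    fin_cases i <;> assumption
  intro x hx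
  funext i
  exact eqOn_zero_of_forall_setIntegral_mul_cubeMode_eq_zero
    ((continuous_apply i).comp_continuousOn hucont) i (hcoeff i) hx

/-- completeness in the cube: a divergence-free vector field on the cube
`(0,π)³`, continuous up to the boundary, `C¹` inside, satisfying the perfectly
conducting boundary conditions, and `L²`-orthogonal to all TE and TM fields, vanishes
identically. -/
theorem cube_completeness (u : V3 → Fin 3 → ℝ)
    (hucont : ContinuousOn u {x : V3 | ∀ i, x i ∈ Set.Icc 0 π})
    (huC1 : ContDiffOn ℝ 1 u {x : V3 | ∀ i, x i ∈ Set.Ioo 0 π})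
    (hudiv : ∀ x : V3, (∀ i, x i ∈ Set.Ioo 0 π) → div3 u x = 0)
    (hubc : ∀ x : V3, (∀ i, x i ∈ Set.Icc 0 π) → ∀ i : Fin 3, (x i = 0 ∨ x i = π) →
      ∀ j, j ≠ i → u x j = 0)
    (hTE : ∀ k₁ k₂ k₃ : ℕ, ¬(k₁ = 0 ∧ k₂ = 0) → 1 ≤ k₃ →
      ∫ x in {x : V3 | ∀ i, x i ∈ Set.Ioo 0 π},
        (∑ i, u x i * ETEcube k₁ k₂ k₃ x i) = 0)
    (hTM : ∀ k₁ k₂ k₃ : ℕ, 1 ≤ k₁ → 1 ≤ k₂ →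
      ∫ x in {x : V3 | ∀ i, x i ∈ Set.Ioo 0 π},
        (∑ i, u x i * ETMcube k₁ k₂ k₃ x i) = 0) :
    ∀ x : V3, (∀ i, x i ∈ Set.Ioo 0 π) → u x = 0 :=
  cube_completeness_general u hucont huC1 hudiv hTE hTM

end
end

section
/- Let 0 < r₀ < R, ℓ > 0, and Ω := { x ∈ ℝ³ : r₀ < |x⊥| < R, 0 < x₃ < ℓ } with x⊥ = (x₁,x₂). The magnetostatic field H(x) := (−x₂/|x⊥|², x₁/|x⊥|², 0) is not identically zero and satisfies curl H = 0 and div H = 0 on Ω, together with the magnetic boundary conditions: H(x)·(x₁/|x⊥|, x₂/|x⊥|, 0) = 0 on the lateral boundary {|x⊥| ∈ {r₀, R}} and H₃ = 0 on the end faces {x₃ ∈ {0, ℓ}}. -/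
noncomputable section

open Real Set

/-- The magnetostatic field of the coaxial cylinder:
`H(x) = (−x₂/|x⊥|², x₁/|x⊥|², 0)`. -/
def Hstatic (x : V3) : Fin 3 → ℝ :=
  ![-x 1 / (x 0 ^ 2 + x 1 ^ 2), x 0 / (x 0 ^ 2 + x 1 ^ 2), 0]

/-! The field `H` is the planar vortex `(-x₂, x₁) / |x⊥|²`, locally the gradient of the polar
angle, which is harmonic off the axis: hence `curl H = 0` and `div H = 0`, a quotient-rule
computation. `H` is tangent to the circles around the axis and has no third component, which
gives both boundary conditions. -/

section PartialDerivatives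

variable {i : Fin 3} {x : V3}

lemma pd3_apply (i j : Fin 3) (x : V3) : pd3 i (fun y => y j) x = if j = i then 1 else 0 := by
  have h : HasFDerivAt (fun y : V3 => y j) (EuclideanSpace.proj j : V3 →L[ℝ] ℝ) x :=
    (EuclideanSpace.proj (𝕜 := ℝ) j).hasFDerivAt
  rw [pd3, h.fderiv]
  simp [PiLp.single_apply]

lemma pd3_const (i : Fin 3) (c : ℝ) (x : V3) : pd3 i (fun _ => c) x = 0 := by
  simp [pd3]

lemma pd3_neg (i : Fin 3) (f : V3 → ℝ) (x : V3) : pd3 i (fun y => -f y) x = -pd3 i f x := by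
  simp [pd3]

lemma pd3_div {f g : V3 → ℝ} (hf : DifferentiableAt ℝ f x) (hg : DifferentiableAt ℝ g x)
    (hgx : g x ≠ 0) :
    pd3 i (fun y => f y / g y) x = (pd3 i f x * g x - f x * pd3 i g x) / g x ^ 2 := by
  have h : HasFDerivAt (fun y => f y * (g y)⁻¹) _ x :=
    hf.hasFDerivAt.mul ((hasDerivAt_inv hgx).comp_hasFDerivAt x hg.hasFDerivAt)
  simp only [div_eq_mul_inv, pd3, h.fderiv, neg_smul, smul_neg, add_apply, neg_apply, smul_apply,
    smul_eq_mul]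
  field_simp
  ring

lemma pd3_sq_add_sq (i : Fin 3) (x : V3) :
    pd3 i (fun y => y 0 ^ 2 + y 1 ^ 2) x =
      2 * x 0 * pd3 i (fun y => y 0) x + 2 * x 1 * pd3 i (fun y => y 1) x := by
  unfold pd3
  rw [fderiv_fun_add (by fun_prop) (by fun_prop), fderiv_fun_pow _ (by fun_prop),
    fderiv_fun_pow _ (by fun_prop)]
  simp

end PartialDerivatives

section Hstatic

variable {x : V3}

lemma pd3_Hstatic_zero (i : Fin 3) (hx : x 0 ^ 2 + x 1 ^ 2 ≠ 0) :
    pd3 i (fun y => Hstatic y 0) x =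
      (-pd3 i (fun y => y 1) x * (x 0 ^ 2 + x 1 ^ 2)
        + x 1 * pd3 i (fun y => y 0 ^ 2 + y 1 ^ 2) x) / (x 0 ^ 2 + x 1 ^ 2) ^ 2 := by
  rw [show (fun y => Hstatic y 0) = fun y => -y 1 / (y 0 ^ 2 + y 1 ^ 2) from rfl,
    pd3_div (by fun_prop) (by fun_prop) hx, pd3_neg]
  ring

lemma pd3_Hstatic_one (i : Fin 3) (hx : x 0 ^ 2 + x 1 ^ 2 ≠ 0) :
    pd3 i (fun y => Hstatic y 1) x =
      (pd3 i (fun y => y 0) x * (x 0 ^ 2 + x 1 ^ 2)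
        - x 0 * pd3 i (fun y => y 0 ^ 2 + y 1 ^ 2) x) / (x 0 ^ 2 + x 1 ^ 2) ^ 2 :=
  pd3_div (by fun_prop) (by fun_prop) hx

lemma pd3_Hstatic_two (i : Fin 3) (x : V3) : pd3 i (fun y => Hstatic y 2) x = 0 :=
  pd3_const i 0 x

lemma curl3_Hstatic (hx : x 0 ^ 2 + x 1 ^ 2 ≠ 0) : curl3 Hstatic x = 0 := by
  ext k
  fin_cases k
  all_goals simp [curl3, pd3_Hstatic_zero _ hx, pd3_Hstatic_one _ hx, pd3_Hstatic_two,
    pd3_sq_add_sq, pd3_apply]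
  field_simp
  ring

lemma div3_Hstatic (hx : x 0 ^ 2 + x 1 ^ 2 ≠ 0) : div3 Hstatic x = 0 := by
  simp [div3, pd3_Hstatic_zero _ hx, pd3_Hstatic_one _ hx, pd3_Hstatic_two, pd3_sq_add_sq,
    pd3_apply]
  field_simp
  ring

lemma Hstatic_ne_zero (hx : x 0 ^ 2 + x 1 ^ 2 ≠ 0) : Hstatic x ≠ 0 := by
  intro h
  have h0 : x 1 = 0 := by simpa [Hstatic, hx] using congrFun h 0
  have h1 : x 0 = 0 := by simpa [Hstatic, hx] using congrFun h 1
  simp [h0, h1] at hx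

lemma Hstatic_two (x : V3) : Hstatic x 2 = 0 := rfl

lemma Hstatic_dot_radial (x : V3) (s : ℝ) :
    ∑ i, Hstatic x i * ![x 0 / s, x 1 / s, 0] i = 0 := by
  simp [Fin.sum_univ_three, Hstatic]
  ring

end Hstatic

/-- in the coaxial cylinder `Ω = {r₀ < |x⊥| < R, 0 < x₃ < ℓ}`, the
magnetostatic field `H(x) = (−x₂/|x⊥|², x₁/|x⊥|², 0)` is not identically zero,
curl-free and divergence-free, and satisfies the magnetic boundary conditions
`H·n = 0` on the lateral boundary and `H₃ = 0` on the end faces. -/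
theorem coax_magnetostatic_mode (r₀ R ℓ : ℝ) (hr₀ : 0 < r₀) (hrR : r₀ < R) (hℓ : 0 < ℓ) :
    (∃ x : V3, (r₀ < Real.sqrt (x 0 ^ 2 + x 1 ^ 2) ∧ Real.sqrt (x 0 ^ 2 + x 1 ^ 2) < R ∧
      0 < x 2 ∧ x 2 < ℓ) ∧ Hstatic x ≠ 0) ∧
    (∀ x : V3, r₀ < Real.sqrt (x 0 ^ 2 + x 1 ^ 2) → Real.sqrt (x 0 ^ 2 + x 1 ^ 2) < R →
      0 < x 2 → x 2 < ℓ →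
      curl3 Hstatic x = (fun _ => (0 : ℝ)) ∧ div3 Hstatic x = 0) ∧
    (∀ x : V3, (Real.sqrt (x 0 ^ 2 + x 1 ^ 2) = r₀ ∨ Real.sqrt (x 0 ^ 2 + x 1 ^ 2) = R) →
      0 ≤ x 2 → x 2 ≤ ℓ →
      (∑ i, Hstatic x i *
        ![x 0 / Real.sqrt (x 0 ^ 2 + x 1 ^ 2), x 1 / Real.sqrt (x 0 ^ 2 + x 1 ^ 2),
          (0 : ℝ)] i) = 0) ∧
    (∀ x : V3, r₀ ≤ Real.sqrt (x 0 ^ 2 + x 1 ^ 2) → Real.sqrt (x 0 ^ 2 + x 1 ^ 2) ≤ R →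
      (x 2 = 0 ∨ x 2 = ℓ) → Hstatic x 2 = 0) := by
  have off_axis {x : V3} (h : r₀ < Real.sqrt (x 0 ^ 2 + x 1 ^ 2)) : x 0 ^ 2 + x 1 ^ 2 ≠ 0 :=
    (Real.sqrt_pos.mp (hr₀.trans h)).ne'
  refine ⟨?_, fun x h _ _ _ => ⟨curl3_Hstatic (off_axis h), div3_Hstatic (off_axis h)⟩,
    fun x _ _ _ => Hstatic_dot_radial x _, fun x _ _ _ => Hstatic_two x⟩
  obtain ⟨m, hr₀m, hmR⟩ := exists_between hrR
  let x : V3 := WithLp.toLp 2 ![m, 0, ℓ / 2]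
  have hx : Real.sqrt (x 0 ^ 2 + x 1 ^ 2) = m := by
    simpa [x] using Real.sqrt_sq (hr₀.trans hr₀m).le
  have hr : r₀ < Real.sqrt (x 0 ^ 2 + x 1 ^ 2) := hx ▸ hr₀m
  refine ⟨x, ⟨hr, hx ▸ hmR, by simp [x, hℓ], by simp [x, hℓ]⟩, ?_⟩
  exact Hstatic_ne_zero (off_axis hr)

end
end

section
/- Let Ω ⊆ ℝ³ \ {0} be open and q : Ω → ℝ be smooth (C^∞). Define the spherical Debye ansatz M[q] := curl(x ↦ q(x)·x/|x|) and N[q] := curl M[q]. Then on Ω: N[q](x) = ∇(∂_ρ q)(x) − (x/|x|)·(|x|·Δ(q/|x|)(x)) where ∂_ρ q(x) = ∇q(x)·(x/|x|), and curl N[q] = −M[ x ↦ |x|·Δ(q/|x|)(x) ], i.e. curl curl curl(q·x/|x|) = −curl( (|x|·Δ(q/|x|))·x/|x| ). -/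
noncomputable section

open Real Set
open scoped ContDiff

/-- The spherical Debye ansatz `M[q] = curl(q·x/|x|)`. -/
def Msph (q : V3 → ℝ) : V3 → Fin 3 → ℝ := curl3 (fun y => fun i => q y * y i / ‖y‖)

/-- The scalar operator `q ↦ |x|·Δ(q/|x|)`. -/
def Lsph (q : V3 → ℝ) (y : V3) : ℝ := ‖y‖ * lap3 (fun z => q z / ‖z‖) y

/-- The radial derivative `∂_ρ q(x) = ∇q(x)·(x/|x|)`. -/
def radialDeriv (q : V3 → ℝ) (y : V3) : ℝ := ∑ j, pd3 j q y * (y j / ‖y‖)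

/-! With `g = q/|x|` the potential field is `g x`, so
`N[q] = curl curl (g x) = ∇ div (g x) − Δ(g x)`.
Since `div (g x) = x·∇g + 3g`, `Δ(g x) = x Δg + 2∇g` and `∂_ρ q = x·∇g + g`, this is
`∇(∂_ρ q) − x Δg`, the first formula. It holds on a neighbourhood of each point, so the second
follows by taking curls: `curl ∇ = 0`, and `(x/|x|)·L` is the potential field of `M[L]`. -/

open Filter Topology

section PartialDerivatives

variable {f g : V3 → ℝ} {x : V3}

theorem Filter.EventuallyEq.pd3_eq (h : f =ᶠ[𝓝 x] g) (i : Fin 3) : pd3 i f x = pd3 i g x := by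
  rw [pd3, pd3, h.fderiv_eq]

theorem pd3_fun_add (hf : DifferentiableAt ℝ f x) (hg : DifferentiableAt ℝ g x) (i : Fin 3) :
    pd3 i (fun y => f y + g y) x = pd3 i f x + pd3 i g x := by
  simp [pd3, fderiv_fun_add hf hg]

theorem pd3_fun_sub (hf : DifferentiableAt ℝ f x) (hg : DifferentiableAt ℝ g x) (i : Fin 3) :
    pd3 i (fun y => f y - g y) x = pd3 i f x - pd3 i g x := by
  simp [pd3, fderiv_fun_sub hf hg]

theorem pd3_fun_mul (hf : DifferentiableAt ℝ f x) (hg : DifferentiableAt ℝ g x) (i : Fin 3) :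
    pd3 i (fun y => f y * g y) x = pd3 i f x * g x + f x * pd3 i g x := by
  simp only [pd3, fderiv_fun_mul hf hg, add_apply, smul_apply, smul_eq_mul]
  ring

theorem pd3_const_mul (c : ℝ) (hf : DifferentiableAt ℝ f x) (i : Fin 3) :
    pd3 i (fun y => c * f y) x = c * pd3 i f x := by
  simp [pd3, fderiv_const_mul hf]

theorem pd3_fun_sum {ι : Type*} (s : Finset ι) {F : ι → V3 → ℝ}
    (hF : ∀ j ∈ s, DifferentiableAt ℝ (F j) x) (i : Fin 3) :
    pd3 i (fun y => ∑ j ∈ s, F j y) x = ∑ j ∈ s, pd3 i (F j) x := by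
  simp [pd3, fderiv_fun_sum hF]

theorem pd3_coord (i j : Fin 3) : pd3 j (fun y : V3 => y i) x = if i = j then 1 else 0 := by
  rw [pd3, show (fun y : V3 => y i) = EuclideanSpace.proj (𝕜 := ℝ) i from rfl,
    ContinuousLinearMap.fderiv]
  simp [PiLp.single_apply]

theorem pd3_norm (hx : x ≠ 0) (j : Fin 3) : pd3 j (fun y : V3 => ‖y‖) x = x j / ‖x‖ := by
  have hd : DifferentiableAt ℝ (fun y : V3 => ‖y‖) x :=
    (contDiffAt_norm ℝ hx (n := 1)).differentiableAt one_ne_zero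
  -- differentiate `‖y‖ ^ 2 = ‖y‖ * ‖y‖` in two ways
  have hsq : pd3 j (fun y : V3 => ‖y‖ ^ 2) x = 2 * x j := by
    simp [pd3, EuclideanSpace.inner_single_right]
  simp only [sq, pd3_fun_mul hd hd] at hsq
  have : ‖x‖ ≠ 0 := norm_ne_zero_iff.2 hx
  field_simp
  linarith

end PartialDerivatives

section Smoothness

variable {f : V3 → ℝ} {x : V3} {m n : WithTop ℕ∞}

theorem ContDiffAt.contDiffAt_pd3 (hf : ContDiffAt ℝ n f x) (hmn : m + 1 ≤ n) (i : Fin 3) :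
    ContDiffAt ℝ m (pd3 i f) x :=
  (hf.fderiv_right hmn).clm_apply contDiffAt_const

theorem ContDiffAt.differentiableAt_pd3 (hf : ContDiffAt ℝ 2 f x) (i : Fin 3) :
    DifferentiableAt ℝ (pd3 i f) x :=
  (hf.contDiffAt_pd3 (m := 1) (by norm_num) i).differentiableAt one_ne_zero

theorem pd3_comm (hf : ContDiffAt ℝ 2 f x) (i j : Fin 3) :
    pd3 i (pd3 j f) x = pd3 j (pd3 i f) x := by
  have hd : DifferentiableAt ℝ (fderiv ℝ f) x :=
    (hf.fderiv_right (m := 1) (by norm_num)).differentiableAt one_ne_zero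
  have h2 : ∀ k l, pd3 k (pd3 l f) x =
      fderiv ℝ (fderiv ℝ f) x (EuclideanSpace.single k 1) (EuclideanSpace.single l 1) := by
    intro k l
    unfold pd3
    simp [fderiv_clm_apply hd (differentiableAt_const _)]
  rw [h2, h2]
  exact (hf.isSymmSndFDerivAt (by simp)).eq _ _

theorem ContDiffAt.contDiffAt_lap3 (hf : ContDiffAt ℝ n f x) (hmn : m + 2 ≤ n) :
    ContDiffAt ℝ m (lap3 f) x := by
  have h : ∀ i, ContDiffAt ℝ m (pd3 i (pd3 i f)) x := fun i =>
    (hf.contDiffAt_pd3 (le_trans (by rw [add_assoc]; rfl) hmn) i).contDiffAt_pd3 le_rfl i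
  exact ((h 0).add (h 1)).add (h 2)

end Smoothness

section VectorCalculus

variable {f : V3 → ℝ} {u v : V3 → Fin 3 → ℝ} {x : V3}

theorem grad3_apply (i : Fin 3) : grad3 f x i = pd3 i f x := by
  fin_cases i <;> rfl

theorem Filter.EventuallyEq.curl3_eq (h : u =ᶠ[𝓝 x] v) : curl3 u x = curl3 v x := by
  have hk : ∀ k : Fin 3, (fun y => u y k) =ᶠ[𝓝 x] fun y => v y k := fun k =>
    h.fun_comp (· k)
  simp only [curl3, (hk _).pd3_eq]

theorem curl3_fun_sub (hu : ∀ k, DifferentiableAt ℝ (fun y => u y k) x)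
    (hv : ∀ k, DifferentiableAt ℝ (fun y => v y k) x) :
    curl3 (fun y i => u y i - v y i) x = curl3 u x - curl3 v x := by
  funext i
  fin_cases i <;>
  · simp only [curl3, Fin.zero_eta, Fin.mk_one, Fin.reduceFinMk, Fin.isValue, Matrix.cons_val,
      Matrix.cons_val_one, Matrix.cons_val_zero, pd3_fun_sub (hu _) (hv _), Pi.sub_apply]
    ring

theorem curl3_grad3 (hf : ContDiffAt ℝ 2 f x) : curl3 (grad3 f) x = 0 := by
  funext i
  fin_cases i <;> simp [curl3, grad3, pd3_comm hf 1 2, pd3_comm hf 2 0, pd3_comm hf 0 1]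

theorem curl3_curl3 (hu : ∀ k, ContDiffAt ℝ 2 (fun y => u y k) x) :
    curl3 (curl3 u) x = fun i => pd3 i (div3 u) x - lap3 (fun y => u y i) x := by
  have hd : ∀ j k, DifferentiableAt ℝ (pd3 j fun y => u y k) x := fun j k =>
    (hu k).differentiableAt_pd3 j
  have hdiv : ∀ i, pd3 i (div3 u) x = ∑ k, pd3 i (pd3 k fun y => u y k) x := by
    intro i
    rw [show div3 u = fun y => pd3 0 (fun y => u y 0) y + pd3 1 (fun y => u y 1) y
      + pd3 2 (fun y => u y 2) y from rfl, pd3_fun_add ((hd 0 0).fun_add (hd 1 1)) (hd 2 2),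
      pd3_fun_add (hd 0 0) (hd 1 1), Fin.sum_univ_three]
  funext i
  have hc : ∀ k, pd3 k (pd3 i fun y => u y k) x = pd3 i (pd3 k fun y => u y k) x := fun k =>
    pd3_comm (hu k) k i
  fin_cases i <;>
  · simp only [Fin.zero_eta, Fin.mk_one, Fin.reduceFinMk, Fin.isValue, curl3, Matrix.cons_val,
      Matrix.cons_val_one, Matrix.cons_val_zero, pd3_fun_sub (hd _ _) (hd _ _), hdiv,
      Fin.sum_univ_three, lap3] at hc ⊢
    linarith [hc 0, hc 1, hc 2]

end VectorCalculus

def euler3 (g : V3 → ℝ) (y : V3) : ℝ := ∑ j, y j * pd3 j g y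

section RadialField

variable {g q : V3 → ℝ} {x : V3}

theorem pd3_mul_coord (hg : DifferentiableAt ℝ g x) (i j : Fin 3) :
    pd3 j (fun y => g y * y i) x = pd3 j g x * x i + if i = j then g x else 0 := by
  rw [pd3_fun_mul hg (by fun_prop), pd3_coord]
  split_ifs <;> ring

theorem div3_mul_coord (hg : DifferentiableAt ℝ g x) :
    div3 (fun y i => g y * y i) x = euler3 g x + 3 * g x := by
  simp only [div3, euler3, pd3_mul_coord hg, Fin.sum_univ_three, if_true]
  ring

theorem lap3_mul_coord (hg : ContDiffAt ℝ 2 g x) (i : Fin 3) :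
    lap3 (fun y => g y * y i) x = lap3 g x * x i + 2 * pd3 i g x := by
  have hgd : ∀ᶠ y in 𝓝 x, DifferentiableAt ℝ g y :=
    (hg.eventually (by simp)).mono fun y hy => hy.differentiableAt two_ne_zero
  have hsecond : ∀ j, pd3 j (pd3 j fun y => g y * y i) x =
      pd3 j (pd3 j g) x * x i + 2 * if i = j then pd3 j g x else 0 := by
    intro j
    have h : (pd3 j fun y => g y * y i) =ᶠ[𝓝 x]
        fun y => pd3 j g y * y i + if i = j then g y else 0 :=
      hgd.mono fun y hy => pd3_mul_coord hy i j
    rw [h.pd3_eq]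
    split_ifs with hij
    · rw [pd3_fun_add ((hg.differentiableAt_pd3 j).fun_mul (by fun_prop))
        (hg.differentiableAt two_ne_zero), pd3_mul_coord (hg.differentiableAt_pd3 j), if_pos hij]
      ring
    · simp [pd3_mul_coord (hg.differentiableAt_pd3 j), hij]
  simp only [lap3, hsecond]
  fin_cases i <;>
  · simp only [Fin.zero_eta, Fin.mk_one, Fin.reduceFinMk, Fin.isValue, Fin.reduceEq, zero_ne_one,
      one_ne_zero, ↓reduceIte]
    ring

theorem ContDiffAt.contDiffAt_euler3 {n : WithTop ℕ∞} (hg : ContDiffAt ℝ (n + 1) g x) :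
    ContDiffAt ℝ n (euler3 g) x :=
  ContDiffAt.sum fun j _ => (by fun_prop : ContDiffAt ℝ n (fun y : V3 => y j) x).mul
    (hg.contDiffAt_pd3 le_rfl j)

theorem pd3_euler3 (hg : ContDiffAt ℝ 2 g x) (i : Fin 3) :
    pd3 i (euler3 g) x = euler3 (pd3 i g) x + pd3 i g x := by
  have hcoord : ∀ j : Fin 3, DifferentiableAt ℝ (fun y : V3 => y j) x := fun j => by fun_prop
  rw [show euler3 g = fun y => ∑ j, y j * pd3 j g y from rfl,
    pd3_fun_sum _ fun j _ => (hcoord j).fun_mul (hg.differentiableAt_pd3 j)]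
  simp only [euler3, pd3_fun_mul (hcoord _) (hg.differentiableAt_pd3 _), pd3_coord]
  rw [Fin.sum_univ_three, Fin.sum_univ_three, pd3_comm hg i 0, pd3_comm hg i 1, pd3_comm hg i 2]
  fin_cases i <;>
  · simp only [Fin.zero_eta, Fin.mk_one, Fin.reduceFinMk, Fin.isValue, Fin.reduceEq, zero_ne_one,
      one_ne_zero, ↓reduceIte]
    ring

theorem radialDeriv_eq_euler3_add (hx : x ≠ 0) (hq : DifferentiableAt ℝ q x) :
    radialDeriv q x = euler3 (fun y => q y / ‖y‖) x + q x / ‖x‖ := by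
  have hr : ‖x‖ ≠ 0 := norm_ne_zero_iff.2 hx
  have hnorm : DifferentiableAt ℝ (fun y : V3 => ‖y‖) x :=
    (contDiffAt_norm ℝ hx (n := 1)).differentiableAt one_ne_zero
  have hg : DifferentiableAt ℝ (fun y => q y / ‖y‖) x := by
    simpa only [div_eq_mul_inv] using hq.fun_mul (hnorm.fun_inv hr)
  have hq_eq : q =ᶠ[𝓝 x] fun y => ‖y‖ * (q y / ‖y‖) :=
    (eventually_ne_nhds hx).mono fun y hy => by field_simp [norm_ne_zero_iff.2 hy]
  have hsq : ∑ j, x j ^ 2 = ‖x‖ ^ 2 := (EuclideanSpace.real_norm_sq_eq x).symm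
  simp only [radialDeriv, euler3, hq_eq.pd3_eq, pd3_fun_mul hnorm hg, pd3_norm hx]
  simp only [Fin.sum_univ_three] at hsq ⊢
  field_simp
  linear_combination q x * hsq

end RadialField

section SphericalDebye

variable {q : V3 → ℝ} {x : V3}

theorem curl3_Msph (hx : x ≠ 0) (hq : ContDiffAt ℝ 2 q x) :
    curl3 (Msph q) x = fun i => grad3 (radialDeriv q) x i - (x i / ‖x‖) * Lsph q x := by
  let g : V3 → ℝ := fun y => q y / ‖y‖
  have hg : ContDiffAt ℝ 2 g x := hq.div (contDiffAt_norm ℝ hx) (norm_ne_zero_iff.2 hx)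
  have hgx : DifferentiableAt ℝ g x := hg.differentiableAt two_ne_zero
  have hE : DifferentiableAt ℝ (euler3 g) x :=
    (hg.contDiffAt_euler3 (n := 1)).differentiableAt one_ne_zero
  have hMsph : Msph q = curl3 fun y i => g y * y i := by
    simp only [Msph, g, div_mul_eq_mul_div]
  have hdiv : div3 (fun y i => g y * y i) =ᶠ[𝓝 x] fun y => euler3 g y + 3 * g y :=
    (hg.eventually (by simp)).mono fun y hy => div3_mul_coord (hy.differentiableAt two_ne_zero)
  have hrad : radialDeriv q =ᶠ[𝓝 x] fun y => euler3 g y + g y := by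
    filter_upwards [eventually_ne_nhds hx, hq.eventually (by simp)] with y hy hqy
    exact radialDeriv_eq_euler3_add hy (hqy.differentiableAt two_ne_zero)
  have hL : Lsph q x = ‖x‖ * lap3 g x := rfl
  have hr : ‖x‖ ≠ 0 := norm_ne_zero_iff.2 hx
  rw [hMsph, curl3_curl3 fun k => hg.mul (by fun_prop)]
  funext i
  rw [grad3_apply, hdiv.pd3_eq, hrad.pd3_eq,
    pd3_fun_add hE (hgx.const_mul 3), pd3_fun_add hE hgx, pd3_const_mul 3 hgx, pd3_euler3 hg,
    lap3_mul_coord hg, hL]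
  field_simp
  ring

theorem curl3_curl3_Msph (hx : x ≠ 0) (hq : ContDiffAt ℝ 3 q x) :
    curl3 (curl3 (Msph q)) x = fun i => -(Msph (Lsph q) x i) := by
  have hr : ‖x‖ ≠ 0 := norm_ne_zero_iff.2 hx
  have hN : curl3 (Msph q) =ᶠ[𝓝 x]
      fun y i => grad3 (radialDeriv q) y i - Lsph q y * y i / ‖y‖ := by
    filter_upwards [eventually_ne_nhds hx, hq.eventually (by simp)] with y hy hqy
    rw [curl3_Msph hy (hqy.of_le (by norm_num))]
    funext i
    ring
  have hD : ContDiffAt ℝ 2 (radialDeriv q) x :=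
    ContDiffAt.sum fun j _ => (hq.contDiffAt_pd3 (by norm_num) j).mul
      ((by fun_prop : ContDiffAt ℝ 2 (fun y : V3 => y j) x).div (contDiffAt_norm ℝ hx) hr)
  have hL : ContDiffAt ℝ 1 (Lsph q) x :=
    (contDiffAt_norm ℝ hx).mul ((hq.div (contDiffAt_norm ℝ hx) hr).contDiffAt_lap3 (by norm_num))
  have hLx : ∀ k : Fin 3, DifferentiableAt ℝ (fun y => Lsph q y * y k / ‖y‖) x := fun k =>
    ((hL.mul (by fun_prop)).div (contDiffAt_norm ℝ hx) hr).differentiableAt one_ne_zero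
  have hgradD : ∀ k : Fin 3, DifferentiableAt ℝ (fun y => grad3 (radialDeriv q) y k) x :=
    fun k => by simpa only [grad3_apply] using hD.differentiableAt_pd3 k
  rw [hN.curl3_eq, curl3_fun_sub hgradD hLx, curl3_grad3 hD, zero_sub]
  rfl

end SphericalDebye

/-- for a smooth potential `q` on an open `Ω ⊆ ℝ³ \ {0}`, the spherical
Debye fields `M[q] = curl(q·x/|x|)` and `N[q] = curl M[q]` satisfy
`N[q] = ∇(∂_ρ q) − (x/|x|)·(|x|·Δ(q/|x|))` and `curl N[q] = −M[|x|·Δ(q/|x|)]` on `Ω`. -/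
theorem spherical_debye_formulas (Ω : Set V3) (hΩ : IsOpen Ω) (hΩ0 : (0 : V3) ∉ Ω)
    (q : V3 → ℝ) (hq : ContDiffOn ℝ ∞ q Ω) :
    ∀ x ∈ Ω,
      curl3 (Msph q) x =
        (fun i => grad3 (radialDeriv q) x i - (x i / ‖x‖) * Lsph q x) ∧
      curl3 (curl3 (Msph q)) x = (fun i => -(Msph (Lsph q) x i)) := by
  intro x hx
  have hx0 : x ≠ 0 := fun h => hΩ0 (h ▸ hx)
  have hqx : ContDiffAt ℝ 3 q x := (hq.contDiffAt (hΩ.mem_nhds hx)).of_le (by norm_cast)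
  exact ⟨curl3_Msph hx0 (hqx.of_le (by norm_num)), curl3_curl3_Msph hx0 hqx⟩

end
end

section
/- Let n ∈ ℕ, k ∈ ℝ with k ≠ 0, R > 0, let P : ℝ³ → ℝ be harmonic (ΔP = 0) and positively homogeneous of degree n, and let ψ : (0,∞) → ℝ be C^∞ satisfying ψ''(ρ) + (k² − n(n+1)/ρ²)·ψ(ρ) = 0 for all ρ > 0 together with the Dirichlet condition ψ(R) = 0. Define q(x) := P(x/|x|)·ψ(|x|) on ℝ³ \ {0} and M[q] := curl(q·x/|x|). Then M[q](x) = 0 for every x with |x| = R; in particular the field M[q] satisfies the perfectly conducting electric boundary condition M[q] × n = 0 on the sphere of radius R. -/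
noncomputable section

open Real Set
open scoped ContDiff

/-- The Debye potential `q(x) = P(x/|x|)·ψ(|x|)` built from a spherical harmonic (the
restriction to the sphere of a homogeneous harmonic polynomial `P`) and a radial
profile `ψ`. -/
def debyePot (P : V3 → ℝ) (ψ : ℝ → ℝ) (x : V3) : ℝ := P (‖x‖⁻¹ • x) * ψ ‖x‖

/-!
Write the field as `q(y) y/|y| = w(|y|) P(y/|y|) y` with `w(ρ) = ψ(ρ)/ρ`. Since `w(R) = 0`, on the
sphere only the derivative of the factor `w(|y|)` survives, so there
`∂ⱼ(q yᵢ/|y|) = w'(R) P(x/R) xᵢ xⱼ / R`. This Jacobian is symmetric in `i, j`, so the curl vanishes.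
-/

section RadialFactor

variable {E : Type*} [NormedAddCommGroup E] [InnerProductSpace ℝ E]

theorem hasFDerivAt_norm_of_ne_zero {x : E} (hx : x ≠ 0) :
    HasFDerivAt (fun y : E => ‖y‖) (‖x‖⁻¹ • innerSL ℝ x) x := by
  have hsqrt := (hasStrictFDerivAt_norm_sq x).hasFDerivAt.sqrt (by positivity)
  simp only [Real.sqrt_sq (norm_nonneg _)] at hsqrt
  refine hsqrt.congr_fderiv ?_
  ext v
  simp only [FunLike.coe_smul, Pi.smul_apply, smul_eq_mul, two_smul,
    FunLike.coe_add, Pi.add_apply]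
  field_simp
  ring

theorem hasFDerivAt_comp_norm_mul_of_eq_zero {w : ℝ → ℝ} {c : ℝ} {G : E → ℝ} {x : E}
    (hx : x ≠ 0) (hw : HasDerivAt w c ‖x‖) (hw0 : w ‖x‖ = 0) (hG : DifferentiableAt ℝ G x) :
    HasFDerivAt (fun y => w ‖y‖ * G y) ((G x * c / ‖x‖) • innerSL ℝ x) x := by
  have hprod := (hw.comp_hasFDerivAt x (hasFDerivAt_norm_of_ne_zero hx)).mul hG.hasFDerivAt
  refine hprod.congr_fderiv ?_
  ext v
  simp only [Function.comp_apply, hw0, zero_smul, zero_add, FunLike.coe_smul, Pi.smul_apply,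
    smul_eq_mul]
  ring

theorem differentiableAt_inv_norm_smul {x : E} (hx : x ≠ 0) :
    DifferentiableAt ℝ (fun y : E => ‖y‖⁻¹ • y) x :=
  ((hasFDerivAt_norm_of_ne_zero hx).differentiableAt.inv (norm_ne_zero_iff.mpr hx)).smul
    differentiableAt_id

end RadialFactor

theorem pd3_comp_norm_mul_of_eq_zero {w : ℝ → ℝ} {c : ℝ} {G : V3 → ℝ} {x : V3} (j : Fin 3)
    (hx : x ≠ 0) (hw : HasDerivAt w c ‖x‖) (hw0 : w ‖x‖ = 0) (hG : DifferentiableAt ℝ G x) :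
    pd3 j (fun y => w ‖y‖ * G y) x = G x * c / ‖x‖ * x j := by
  rw [pd3, (hasFDerivAt_comp_norm_mul_of_eq_zero hx hw hw0 hG).fderiv]
  simp [EuclideanSpace.inner_single_right]

theorem curl3_eq_zero_of_pd3_symm {u : V3 → Fin 3 → ℝ} {x : V3}
    (h : ∀ i j, pd3 j (fun y => u y i) x = pd3 i (fun y => u y j) x) : curl3 u x = 0 := by
  funext l
  fin_cases l <;> simp [curl3, h 2 1, h 0 2, h 1 0]

theorem spherical_debye_boundary_general (R : ℝ) (hR : 0 < R)
    (P : V3 → ℝ) (hP : ContDiff ℝ ∞ P)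
    (ψ : ℝ → ℝ) (hψ : ContDiffOn ℝ ∞ ψ (Set.Ioi (0 : ℝ)))
    (hψR : ψ R = 0) :
    ∀ x : V3, ‖x‖ = R →
      Msph (debyePot P ψ) x = (fun _ => (0 : ℝ)) ∧
      cross3 (Msph (debyePot P ψ) x) (fun i => x i / ‖x‖) = (fun _ => (0 : ℝ)) := by
  intro x hx
  have hxpos : 0 < ‖x‖ := hx ▸ hR
  have hx0 : x ≠ 0 := norm_pos_iff.mp hxpos
  set w : ℝ → ℝ := fun ρ => ψ ρ / ρ
  have hψx : DifferentiableAt ℝ ψ ‖x‖ :=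
    (hψ.differentiableOn (by simp)).differentiableAt (Ioi_mem_nhds hxpos)
  obtain ⟨c, hw⟩ : ∃ c, HasDerivAt w c ‖x‖ :=
    ⟨_, hψx.hasDerivAt.div (hasDerivAt_id _) hxpos.ne'⟩
  have hw0 : w ‖x‖ = 0 := by simp [w, hx, hψR]
  have hF : DifferentiableAt ℝ (fun y : V3 => P (‖y‖⁻¹ • y)) x :=
    (hP.differentiable (by simp)).differentiableAt.comp x (differentiableAt_inv_norm_smul hx0)
  have hfield : (fun y i => debyePot P ψ y * y i / ‖y‖)
      = fun y i => w ‖y‖ * (P (‖y‖⁻¹ • y) * y i) := by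
    funext y i
    simp only [debyePot, w]
    ring
  have hM : Msph (debyePot P ψ) x = fun _ => 0 := by
    rw [Msph, hfield]
    refine curl3_eq_zero_of_pd3_symm fun i j => ?_
    have hG : ∀ l : Fin 3, DifferentiableAt ℝ (fun y : V3 => P (‖y‖⁻¹ • y) * y l) x := fun l =>
      hF.mul (EuclideanSpace.proj l : V3 →L[ℝ] ℝ).differentiableAt
    rw [pd3_comp_norm_mul_of_eq_zero j hx0 hw hw0 (hG i),
      pd3_comp_norm_mul_of_eq_zero i hx0 hw hw0 (hG j)]
    ring
  refine ⟨hM, ?_⟩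
  rw [hM]
  funext l
  fin_cases l <;> simp [cross3]

/-- if moreover `ψ(R) = 0` (Dirichlet condition), then the TE Debye field
`M[q] = curl(q·x/|x|)` vanishes on the sphere `{|x| = R}`; in particular it satisfies the
perfectly conducting electric boundary condition `M[q] × n = 0` there, where `n = x/|x|`
is the outward unit normal. -/
theorem spherical_debye_boundary (n : ℕ) (k : ℝ) (hk : k ≠ 0) (R : ℝ) (hR : 0 < R)
    (P : V3 → ℝ) (hP : ContDiff ℝ ∞ P) (hPharm : ∀ x : V3, lap3 P x = 0)
    (hPhom : ∀ t : ℝ, 0 < t → ∀ x : V3, P (t • x) = t ^ n * P x)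
    (ψ : ℝ → ℝ) (hψ : ContDiffOn ℝ ∞ ψ (Set.Ioi (0 : ℝ)))
    (hψode : ∀ ρ : ℝ, 0 < ρ →
      deriv (deriv ψ) ρ + (k ^ 2 - n * (n + 1) / ρ ^ 2) * ψ ρ = 0)
    (hψR : ψ R = 0) :
    ∀ x : V3, ‖x‖ = R →
      Msph (debyePot P ψ) x = (fun _ => (0 : ℝ)) ∧
      cross3 (Msph (debyePot P ψ) x) (fun i => x i / ‖x‖) = (fun _ => (0 : ℝ)) :=
  spherical_debye_boundary_general R hR P hP ψ hψ hψR

end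
end
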